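/- For any two genomes A and B over the same finite set of N genes, C + I/2 ≤ N, where C is the number of cycle components and I is the number of odd-length path components of the adjacency graph AG(A,B); moreover equality holds if and only if A = B. -/

import Mathlib

/-! Basic definitions for genomes and the DCJ model, following
Bergeron–Mixtacki–Stoye and Yancopoulos et al. -/

/-- An *extremity* of a gene: the gene together with a Boolean distinguishing
its head (`true`) from its tail (`false`).  A gene set of cardinality `N`
has `2 * N` extremities. -/
abbrev Extremity (G : Type*) := G × Bool

/-- A *genome* over the gene set `G` is a partition of the set of extremities
into blocks of size two (*adjacencies*) and blocks of size one (*telomeres*).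
Such a partition is faithfully encoded by the involution sending each
extremity to the other element of its block (to itself for a telomere). -/
structure Genome (G : Type*) where
  f : Extremity G → Extremity G
  invol : Function.Involutive f

namespace Genome

variable {G : Type*}

/-- The block of the extremity `x` in the genome `A`: either the adjacency
`{x, A.f x}` (when `A.f x ≠ x`) or the telomere `{x}` (when `A.f x = x`). -/
def block (A : Genome G) (x : Extremity G) : Set (Extremity G) := {x, A.f x}

/-- The blocks (adjacencies and telomeres) of a genome. -/
def blocks (A : Genome G) : Set (Set (Extremity G)) := {s | ∃ x, s = A.block x}

end Genome

section AdjacencyGraph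

variable {G : Type*}

/-- The edges of the adjacency graph `AG(A,B)` are indexed by the extremities:
the edge of the extremity `x` joins the block of `x` in `A` with the block of
`x` in `B`.  Two edges `x`, `y` are related by `agStep A B` when they share an
endpoint, i.e. when `y` lies in the `A`-block or in the `B`-block of `x`. -/
def agStep (A B : Genome G) (x y : Extremity G) : Prop := A.f x = y ∨ B.f x = y

/-- The setoid identifying edges of `AG(A,B)` that lie in the same connected
component. -/
def agSetoid (A B : Genome G) : Setoid (Extremity G) :=
  ⟨Relation.EqvGen (agStep A B), Relation.EqvGen.is_equivalence _⟩

/-- The set of edges of the connected component `q` of `AG(A,B)`. -/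
def componentEdges (A B : Genome G) (q : Quotient (agSetoid A B)) :
    Set (Extremity G) :=
  {x | Quotient.mk (agSetoid A B) x = q}

/-- `IsAltPath fA fB n K` : the edge set `K` consists of `n + 1` distinct
edges `e 0, …, e n` forming a simple path: consecutive edges share a block,
alternately a block of the first genome (encoded by the involution `fA`) and
of the second one (`fB`), starting with `fA`; the two free gene ends of the
terminal edges are telomeres (of the second genome at `e 0`, and of the
appropriate genome at `e n` according to parity). -/
def IsAltPath (fA fB : Extremity G → Extremity G) (n : ℕ)
    (K : Set (Extremity G)) : Prop :=
  ∃ e : Fin (n + 1) → Extremity G,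
    Function.Injective e ∧ Set.range e = K ∧
    (∀ i : ℕ, ∀ h : i + 1 < n + 1,
      e ⟨i + 1, h⟩ = (if Even i then fA else fB) (e ⟨i, by omega⟩)) ∧
    fB (e 0) = e 0 ∧
    (if Odd n then fB else fA) (e ⟨n, by omega⟩) = e ⟨n, by omega⟩

/-- `IsAltCycle fA fB K` : the edge set `K` consists of `2 * n` distinct edges
(for some `n > 0`) arranged in a cycle, consecutive edges sharing a block,
alternately a block of the first genome (`fA`) and of the second (`fB`). -/
def IsAltCycle (fA fB : Extremity G → Extremity G) (K : Set (Extremity G)) :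
    Prop :=
  ∃ n : ℕ, 0 < n ∧ ∃ e : ZMod (2 * n) → Extremity G,
    Function.Injective e ∧ Set.range e = K ∧
    ∀ i : ZMod (2 * n), e (i + 1) = (if Even i.val then fA else fB) (e i)

/-- The component `q` of `AG(A,B)` is a cycle. -/
def IsCycleComponent (A B : Genome G) (q : Quotient (agSetoid A B)) : Prop :=
  IsAltCycle A.f B.f (componentEdges A B q) ∨
    IsAltCycle B.f A.f (componentEdges A B q)

/-- The component `q` of `AG(A,B)` is a simple path (with some number
`n + 1 ≥ 1` of edges). -/
def IsPathComponent (A B : Genome G) (q : Quotient (agSetoid A B)) : Prop :=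
  ∃ n : ℕ,
    IsAltPath A.f B.f n (componentEdges A B q) ∨
      IsAltPath B.f A.f n (componentEdges A B q)

/-- The component `q` of `AG(A,B)` is a simple path with an odd number of
edges (`n + 1` edges with `n` even). -/
def IsOddPathComponent (A B : Genome G) (q : Quotient (agSetoid A B)) : Prop :=
  ∃ n : ℕ, Even n ∧
    (IsAltPath A.f B.f n (componentEdges A B q) ∨
      IsAltPath B.f A.f n (componentEdges A B q))

/-- `C`, the number of cycle components of `AG(A,B)`. -/
noncomputable def numCycles (A B : Genome G) : ℕ :=
  Nat.card {q : Quotient (agSetoid A B) // IsCycleComponent A B q}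

/-- `I`, the number of path components of `AG(A,B)` with an odd number of
edges. -/
noncomputable def numOddPaths (A B : Genome G) : ℕ :=
  Nat.card {q : Quotient (agSetoid A B) // IsOddPathComponent A B q}

end AdjacencyGraph

section DCJ

variable {G : Type*} [DecidableEq G]

/-- Rewiring of the pairing `f` that matches `p` with `r` and `q` with `s`,
leaving everything else unchanged. -/
def rewire (f : Extremity G → Extremity G) (p q r s : Extremity G) :
    Extremity G → Extremity G := fun x =>
  if x = p then r else if x = r then p else if x = q then s else
    if x = s then q else f x

/-- A single DCJ operation transforming the genome `A` into the genome `A'`: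
* two adjacencies `{p,q}`, `{r,s}` are replaced by `{p,r}`, `{q,s}` or by
  `{p,s}`, `{q,r}`;
* an adjacency `{p,q}` and a telomere `{r}` are replaced by `{p,r}`, `{q}` or
  by `{p}`, `{q,r}`;
* an adjacency `{p,q}` is replaced by the two telomeres `{p}`, `{q}`;
* two telomeres `{p}`, `{q}` are replaced by the adjacency `{p,q}`.
All other blocks of `A` are unchanged. -/
def DCJStep (A A' : Genome G) : Prop :=
  (∃ p q r s : Extremity G, A.f p = q ∧ p ≠ q ∧ A.f r = s ∧ r ≠ s ∧
      p ≠ r ∧ p ≠ s ∧ q ≠ r ∧ q ≠ s ∧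
      (A'.f = rewire A.f p q r s ∨ A'.f = rewire A.f p q s r)) ∨
  (∃ p q r : Extremity G, A.f p = q ∧ p ≠ q ∧ A.f r = r ∧ r ≠ p ∧ r ≠ q ∧
      (A'.f = rewire A.f p q r q ∨ A'.f = rewire A.f q p r p)) ∨
  (∃ p q : Extremity G, A.f p = q ∧ p ≠ q ∧ A'.f = rewire A.f p q p q) ∨
  (∃ p q : Extremity G, A.f p = p ∧ A.f q = q ∧ p ≠ q ∧
      A'.f = rewire A.f p q q p)

/-- The DCJ distance between two genomes: the least number of DCJ operations
transforming `A` into `B`. -/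
noncomputable def dcjDist (A B : Genome G) : ℕ :=
  sInf {n : ℕ | ∃ g : ℕ → Genome G, g 0 = A ∧ g n = B ∧
    ∀ i < n, DCJStep (g i) (g (i + 1))}

end DCJ

/-! The components of `AG(A, B)` partition its `2N` edges. A cycle has a positive even number
of edges and an odd path at least one, so a component has at least twice as many edges as it
contributes to `C + I/2`, and summing gives `2C + I ≤ 2N`. Equality forces every cycle to have
two edges and every odd path one, so each block of `A` is a block of `B`; conversely, every
component of `AG(A, A)` is such a two-edge cycle or one-edge path. -/

namespace IsAltPath

variable {G : Type*} {fA fB : Extremity G → Extremity G} {n : ℕ} {K : Set (Extremity G)}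

lemma card_eq (h : IsAltPath fA fB n K) : Nat.card K = n + 1 := by
  obtain ⟨e, he, rfl, -⟩ := h
  rw [Nat.card_range_of_injective he, Nat.card_fin]

lemma apply_eq_self_of_card_eq_one (h : IsAltPath fA fB n K) (hK : Nat.card K = 1)
    {x : Extremity G} (hx : x ∈ K) : fA x = x ∧ fB x = x := by
  obtain rfl : n = 0 := by have := h.card_eq; omega
  obtain ⟨e, -, rfl, -, hB, hA⟩ := h
  obtain ⟨i, rfl⟩ := hx
  obtain rfl : i = 0 := Fin.fin_one_eq_zero i
  exact ⟨by simpa using hA, hB⟩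

end IsAltPath

lemma isAltPath_singleton {G : Type*} {fA fB : Extremity G → Extremity G} {x : Extremity G}
    (hA : fA x = x) (hB : fB x = x) : IsAltPath fA fB 0 {x} :=
  ⟨fun _ => x, fun _ _ _ => Subsingleton.elim (α := Fin 1) _ _, by simp, fun _ h => by omega,
    hB, by simpa using hA⟩

namespace IsAltCycle

variable {G : Type*} {fA fB : Extremity G → Extremity G} {K : Set (Extremity G)}

lemma card_eq (h : IsAltCycle fA fB K) : ∃ n, 0 < n ∧ Nat.card K = 2 * n := by
  obtain ⟨n, hn, e, he, rfl, -⟩ := h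
  exact ⟨n, hn, by rw [Nat.card_range_of_injective he, Nat.card_zmod]⟩

lemma apply_eq_of_card_eq_two (hA : Function.Involutive fA) (hB : Function.Involutive fB)
    (h : IsAltCycle fA fB K) (hK : Nat.card K = 2) {x : Extremity G} (hx : x ∈ K) :
    fA x = fB x := by
  obtain ⟨n, -, e, he, rfl, hstep⟩ := h
  obtain rfl : n = 1 := by
    rw [Nat.card_range_of_injective he, Nat.card_zmod] at hK; omega
  have h01 : e 1 = fA (e 0) := hstep 0
  have h10 : e 0 = fB (e 1) := hstep 1
  obtain ⟨i, rfl⟩ := hx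
  fin_cases i
  · change fA (e 0) = fB (e 0)
    rw [← h01, h10, hB]
  · change fA (e 1) = fB (e 1)
    rw [← h10, h01, hA]

end IsAltCycle

lemma isAltCycle_pair {G : Type*} {fA fB : Extremity G → Extremity G} {x : Extremity G}
    (hne : fA x ≠ x) (hAB : fB (fA x) = x) : IsAltCycle fA fB {x, fA x} := by
  refine ⟨1, one_pos, ![x, fA x], ?_, ?_, ?_⟩
  · intro i j hij
    fin_cases i <;> fin_cases j
    exacts [rfl, absurd hij hne.symm, absurd hij hne, rfl]
  · exact Matrix.range_cons_cons_empty x (fA x) ![]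
  · intro i
    fin_cases i
    · rfl
    · exact hAB.symm

section AdjacencyGraph

variable {G : Type*}

lemma eqvGen_agStep_self_iff (A : Genome G) {x y : Extremity G} :
    Relation.EqvGen (agStep A A) x y ↔ y ∈ A.block x := by
  refine ⟨fun h => ?_, ?_⟩
  · induction h with
    | rel x y hxy => exact .inr (hxy.elim id id).symm
    | refl => exact .inl rfl
    | symm x y _ ih =>
      rcases ih with rfl | rfl
      exacts [.inl rfl, .inr (A.invol x).symm]
    | trans x y z _ _ ihxy ihyz =>
      rcases ihxy with rfl | rfl
      · exact ihyz
      · rcases ihyz with rfl | rfl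
        exacts [.inr rfl, .inl (A.invol x)]
  · rintro (rfl | rfl)
    exacts [.refl _, .rel _ _ (.inl rfl)]

lemma componentEdges_self (A : Genome G) (x : Extremity G) :
    componentEdges A A (Quotient.mk _ x) = A.block x := by
  ext y
  exact Quotient.eq.trans ((agSetoid A A).comm'.trans (eqvGen_agStep_self_iff A))

end AdjacencyGraph

attribute [ext] Genome

section Components

variable {G : Type*} {A B : Genome G} {q : Quotient (agSetoid A B)}

lemma IsCycleComponent.card_eq (h : IsCycleComponent A B q) :
    ∃ m, 0 < m ∧ Nat.card (componentEdges A B q) = 2 * m :=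
  h.elim IsAltCycle.card_eq IsAltCycle.card_eq

lemma IsOddPathComponent.card_eq (h : IsOddPathComponent A B q) :
    ∃ n, Even n ∧ Nat.card (componentEdges A B q) = n + 1 := by
  obtain ⟨n, hn, h | h⟩ := h <;> exact ⟨n, hn, h.card_eq⟩

lemma IsOddPathComponent.not_isCycleComponent (h : IsOddPathComponent A B q) :
    ¬IsCycleComponent A B q := fun hC => by
  obtain ⟨m, -, hm⟩ := hC.card_eq
  obtain ⟨n, ⟨k, rfl⟩, hn⟩ := h.card_eq
  omega

open Classical in
/-- Twice the contribution of a component to `C + I / 2`. -/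
noncomputable def componentWeight (A B : Genome G) (q : Quotient (agSetoid A B)) : ℕ :=
  2 * (if IsCycleComponent A B q then 1 else 0) + if IsOddPathComponent A B q then 1 else 0

lemma componentWeight_le_card (q : Quotient (agSetoid A B)) :
    componentWeight A B q ≤ Nat.card (componentEdges A B q) := by
  unfold componentWeight
  split_ifs with hC hO hO
  · exact absurd hC hO.not_isCycleComponent
  · obtain ⟨m, hm, hcard⟩ := hC.card_eq
    omega
  · obtain ⟨n, -, hcard⟩ := hO.card_eq
    omega
  · exact Nat.zero_le _

lemma apply_eq_of_componentWeight_eq_card [Finite G] {x : Extremity G}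
    (h : componentWeight A B q = Nat.card (componentEdges A B q))
    (hx : x ∈ componentEdges A B q) : A.f x = B.f x := by
  have hpos : 0 < Nat.card (componentEdges A B q) :=
    have : Nonempty (componentEdges A B q) := ⟨⟨x, hx⟩⟩
    Nat.card_pos
  unfold componentWeight at h
  split_ifs at h with hC hO hO
  · exact absurd hC hO.not_isCycleComponent
  · rcases hC with hC | hC
    · exact hC.apply_eq_of_card_eq_two A.invol B.invol (by omega) hx
    · exact (hC.apply_eq_of_card_eq_two B.invol A.invol (by omega) hx).symm
  · obtain ⟨n, -, hP | hP⟩ := hO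
    · obtain ⟨hA, hB⟩ := hP.apply_eq_self_of_card_eq_one (by omega) hx
      rw [hA, hB]
    · obtain ⟨hB, hA⟩ := hP.apply_eq_self_of_card_eq_one (by omega) hx
      rw [hA, hB]
  · omega

lemma componentWeight_self_eq_card (A : Genome G) (q : Quotient (agSetoid A A)) :
    componentWeight A A q = Nat.card (componentEdges A A q) := by
  induction q using Quotient.inductionOn with | h x => ?_
  have hedges := componentEdges_self A x
  unfold Genome.block at hedges
  by_cases hfix : A.f x = x
  · rw [hfix, Set.pair_eq_singleton] at hedges
    have hO : IsOddPathComponent A A ⟦x⟧ :=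
      ⟨0, .zero, .inl (hedges ▸ isAltPath_singleton hfix hfix)⟩
    simp [componentWeight, hO, hO.not_isCycleComponent, hedges]
  · have hC : IsCycleComponent A A ⟦x⟧ := .inl (hedges ▸ isAltCycle_pair hfix (A.invol x))
    have hO : ¬IsOddPathComponent A A ⟦x⟧ := fun hO => hO.not_isCycleComponent hC
    simp [componentWeight, hC, hO, hedges, Set.ncard_pair (Ne.symm hfix)]

variable [Fintype (Quotient (agSetoid A B))]

lemma sum_card_componentEdges [Fintype G] :
    ∑ q, Nat.card (componentEdges A B q) = 2 * Fintype.card G :=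
  calc ∑ q, Nat.card (componentEdges A B q)
      = Nat.card (Σ q, componentEdges A B q) := Nat.card_sigma.symm
    _ = Nat.card (Extremity G) := Nat.card_congr (Equiv.sigmaFiberEquiv _)
    _ = 2 * Fintype.card G := by simp [mul_comm]

lemma sum_componentWeight :
    ∑ q, componentWeight A B q = 2 * numCycles A B + numOddPaths A B := by
  classical
  simp only [componentWeight, Finset.sum_add_distrib, ← Finset.mul_sum, Finset.sum_boole,
    numCycles, numOddPaths, Nat.card_eq_fintype_card, Fintype.card_subtype, Nat.cast_id]

end Components

section Bound

variable {G : Type*} [Fintype G]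

theorem two_mul_numCycles_add_numOddPaths_le (A B : Genome G) :
    2 * numCycles A B + numOddPaths A B ≤ 2 * Fintype.card G := by
  classical
  rw [← sum_componentWeight, ← sum_card_componentEdges]
  exact Finset.sum_le_sum fun q _ => componentWeight_le_card q

theorem two_mul_numCycles_add_numOddPaths_eq_iff (A B : Genome G) :
    2 * numCycles A B + numOddPaths A B = 2 * Fintype.card G ↔ A = B := by
  classical
  rw [← sum_componentWeight, ← sum_card_componentEdges,
    Finset.sum_eq_sum_iff_of_le fun q _ => componentWeight_le_card q]
  constructor
  · intro h
    ext1
    funext x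
    exact apply_eq_of_componentWeight_eq_card (h ⟦x⟧ (Finset.mem_univ _)) rfl
  · rintro rfl q -
    exact componentWeight_self_eq_card A q

end Bound

/-- For genomes `A`, `B` over the same finite set of `N` genes,
`C + I/2 ≤ N`, with equality iff `A = B`, where `C` is the number of cycles
and `I` the number of odd paths of the adjacency graph `AG(A,B)`. -/
theorem cycles_add_half_oddPaths_le_card {G : Type*} [Fintype G]
    (A B : Genome G) :
    (numCycles A B : ℚ) + (numOddPaths A B : ℚ) / 2 ≤ (Fintype.card G : ℚ) ∧
    ((numCycles A B : ℚ) + (numOddPaths A B : ℚ) / 2 = (Fintype.card G : ℚ) ↔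
      A = B) := by
  have hle : ((2 * numCycles A B + numOddPaths A B : ℕ) : ℚ) ≤ (2 * Fintype.card G : ℕ) :=
    Nat.cast_le.2 (two_mul_numCycles_add_numOddPaths_le A B)
  have hiff : (numCycles A B : ℚ) + numOddPaths A B / 2 = Fintype.card G ↔
      ((2 * numCycles A B + numOddPaths A B : ℕ) : ℚ) = (2 * Fintype.card G : ℕ) := by
    push_cast
    constructor <;> intro h <;> linarith
  push_cast at hle
  exact ⟨by linarith,
    hiff.trans (Nat.cast_inj.trans (two_mul_numCycles_add_numOddPaths_eq_iff A B))⟩
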